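/- The Petersen graph, i.e. the Kneser graph K(5,2), has metric dimension 3. -/

import Mathlib

/-! Two distinct pairs from a 5-set that meet span only 3 points, and the other two points form a
common neighbour, so the Petersen graph has diameter 2. Hence two landmarks give each vertex one
of at most `3 ^ 2 = 9` distance vectors, too few for 10 vertices, while the three pairs through a
common point already separate all vertices. -/

/-- `S` is a resolving set for the graph `G`: every pair of distinct vertices is
resolved by some vertex of `S` (via the geodesic distance `SimpleGraph.dist`). -/
def IsResolvingSet {V : Type*} (G : SimpleGraph V) (S : Set V) : Prop :=
  ∀ u w : V, u ≠ w → ∃ v ∈ S, G.dist u v ≠ G.dist w v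

/-- The metric dimension of `G`: the smallest size of a resolving set. -/
noncomputable def metricDim {V : Type*} (G : SimpleGraph V) : ℕ :=
  sInf {n : ℕ | ∃ S : Finset V, IsResolvingSet G (↑S) ∧ S.card = n}

/-- The Kneser graph `K(n,k)`: vertices are the k-element subsets of an
`n`-element set, adjacent when they are disjoint. -/
def kneserGraph (n k : ℕ) (hk : k ≠ 0) : SimpleGraph {s : Finset (Fin n) // s.card = k} where
  Adj a b := Disjoint (a : Finset (Fin n)) (b : Finset (Fin n))
  symm := ⟨fun a b h => h.symm⟩
  loopless := ⟨fun a h => by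
    have h0 : (a : Finset (Fin n)) = ∅ := disjoint_self.mp h
    exact hk (by simpa [h0] using a.2.symm)⟩

lemma SimpleGraph.dist_eq_two {V : Type*} {G : SimpleGraph V} {u v : V} (hne : u ≠ v)
    (hnadj : ¬G.Adj u v) (hcommon : (G.commonNeighbors u v).Nonempty) : G.dist u v = 2 := by
  simp [SimpleGraph.dist, G.edist_eq_two_iff.mpr ⟨hne, hnadj, hcommon⟩]

section ResolvingSet

variable {V : Type*} {G : SimpleGraph V}

/-- The vector of distances to `S` determines the vertex. -/
lemma IsResolvingSet.card_le_pow [Fintype V] {S : Finset V} (hS : IsResolvingSet G S) {D : ℕ}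
    (hD : ∀ u v, G.dist u v ≤ D) : Fintype.card V ≤ (D + 1) ^ S.card := by
  classical
  let distVector : V → (S → Fin (D + 1)) := fun u v => ⟨G.dist u v, Nat.lt_succ_of_le (hD u v)⟩
  have hinj : distVector.Injective := by
    intro u w huw
    by_contra hne
    obtain ⟨v, hv, hdist⟩ := hS u w hne
    exact hdist (congrArg Fin.val (congrFun huw ⟨v, hv⟩))
  simpa using Fintype.card_le_of_injective distVector hinj

lemma metricDim_eq_of_isResolvingSet {k : ℕ} (S : Finset V) (hS : IsResolvingSet G S)
    (hcard : S.card = k) (hmin : ∀ T : Finset V, IsResolvingSet G T → k ≤ T.card) :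
    metricDim G = k := by
  have hk : k ∈ {n : ℕ | ∃ S : Finset V, IsResolvingSet G (↑S) ∧ S.card = n} := ⟨S, hS, hcard⟩
  refine le_antisymm (Nat.sInf_le hk) (le_csInf ⟨k, hk⟩ ?_)
  rintro _ ⟨T, hT, rfl⟩
  exact hmin T hT

end ResolvingSet

section Kneser

variable {n k : ℕ} (hk : k ≠ 0)

/-- Two intersecting `k`-sets cover at most `2k - 1` points, leaving room for a disjoint `k`-set
when `3k - 1 ≤ n`. -/
lemma kneserGraph_commonNeighbors_nonempty (hn : 3 * k ≤ n + 1)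
    (u v : {s : Finset (Fin n) // s.card = k}) (h : ¬(kneserGraph n k hk).Adj u v) :
    ((kneserGraph n k hk).commonNeighbors u v).Nonempty := by
  have hinter : 1 ≤ (u.1 ∩ v.1).card :=
    Finset.card_pos.mpr (Finset.not_disjoint_iff_nonempty_inter.mp h)
  have hunion : (u.1 ∪ v.1).card + (u.1 ∩ v.1).card = 2 * k := by
    rw [Finset.card_union_add_card_inter, u.2, v.2, two_mul]
  have hcompl : k ≤ (u.1 ∪ v.1)ᶜ.card := by
    rw [Finset.card_compl, Fintype.card_fin]
    omega
  obtain ⟨t, ht, htcard⟩ := Finset.exists_subset_card_eq hcompl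
  have htu : Disjoint u.1 t := Finset.disjoint_of_subset_right ht
    (disjoint_compl_right_iff.mpr Finset.subset_union_left)
  have htv : Disjoint v.1 t := Finset.disjoint_of_subset_right ht
    (disjoint_compl_right_iff.mpr Finset.subset_union_right)
  exact ⟨⟨t, htcard⟩, (kneserGraph n k hk).mem_commonNeighbors.mpr ⟨htu, htv⟩⟩

lemma kneserGraph_dist (hn : 3 * k ≤ n + 1) (u v : {s : Finset (Fin n) // s.card = k}) :
    (kneserGraph n k hk).dist u v = if u = v then 0 else if Disjoint u.1 v.1 then 1 else 2 := by
  split_ifs with heq hdisj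
  · simp [heq]
  · exact SimpleGraph.dist_eq_one_iff_adj.mpr hdisj
  · exact SimpleGraph.dist_eq_two heq hdisj (kneserGraph_commonNeighbors_nonempty hk hn u v hdisj)

lemma kneserGraph_dist_le_two (hn : 3 * k ≤ n + 1) (u v : {s : Finset (Fin n) // s.card = k}) :
    (kneserGraph n k hk).dist u v ≤ 2 := by
  rw [kneserGraph_dist hk hn]
  split_ifs <;> omega

end Kneser

lemma petersenGraph_isResolvingSet_pairs_through_zero :
    IsResolvingSet (kneserGraph 5 2 (by norm_num))
      ↑({⟨{0, 1}, rfl⟩, ⟨{0, 2}, rfl⟩, ⟨{0, 3}, rfl⟩} : Finset {s : Finset (Fin 5) // s.card = 2}) := by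
  unfold IsResolvingSet
  simp only [Finset.mem_coe, kneserGraph_dist _ (by norm_num : 3 * 2 ≤ 5 + 1)]
  decide

theorem metricDim_petersenGraph :
    metricDim (kneserGraph 5 2 (by norm_num)) = 3 := by
  refine metricDim_eq_of_isResolvingSet _ petersenGraph_isResolvingSet_pairs_through_zero
    (by decide) fun T hT => ?_
  have hbound : 10 ≤ 3 ^ T.card := by
    simpa [Nat.choose_two_right] using hT.card_le_pow (kneserGraph_dist_le_two _ (by norm_num))
  by_contra! hsmall
  have : 3 ^ T.card ≤ 3 ^ 2 := Nat.pow_le_pow_right (by norm_num) (by omega)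
  omega
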